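/- Let C ⊆ ℱ be a nonempty compact set. Then sup_{z∈C} sup_{(c,d)∈𝒫} | (1/k_n) · log|σ^{(n)}_{c,d}(z)| − log r_{c,d}(z) | → 0 as n → ∞. -/

import Mathlib

open Filter Topology Set

/-- `σ_{c,d}(z) = exp(2πi m (az+b)/(cz+d)) / (cz+d)^k` with the concrete Bézout choice
`a = gcdB c d`, `b = -gcdA c d` (so that `a*d - b*c = gcd c d = 1` for coprime `c,d`;
the value is independent of this choice since `m` is an integer). -/
noncomputable def sigmaP (k m : ℕ) (c d : ℤ) (z : ℂ) : ℂ :=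
  Complex.exp (2 * Real.pi * Complex.I * (m : ℂ) *
      ((Int.gcdB c d : ℂ) * z - (Int.gcdA c d : ℂ)) / ((c : ℂ) * z + (d : ℂ))) /
    ((c : ℂ) * z + (d : ℂ)) ^ k

/-- The index set `𝒫`: coprime pairs `(c,d)` with `c > 0`, together with `(0,1)`. -/
def Pset : Set (ℤ × ℤ) := {p | (IsCoprime p.1 p.2 ∧ 0 < p.1) ∨ p = (0, 1)}

/-- The Poincaré series `P_{k,m}(z) = Σ_{(c,d)∈𝒫} σ_{c,d}(z)`. -/
noncomputable def poincareP (k m : ℕ) (z : ℂ) : ℂ :=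
  ∑' p : Pset, sigmaP k m p.1.1 p.1.2 z

/-- `r_{c,d}(z) = exp(-2πα · Im z/|cz+d|²)/|cz+d|`. -/
noncomputable def rP (α : ℝ) (c d : ℤ) (z : ℂ) : ℝ :=
  Real.exp (-2 * Real.pi * α * z.im / ‖(c : ℂ) * z + (d : ℂ)‖ ^ 2) /
    ‖(c : ℂ) * z + (d : ℂ)‖

/-- The standard fundamental domain `ℱ` for `SL(2,ℤ)`. -/
noncomputable def Fdom : Set ℂ :=
  {z | 0 < z.im ∧ ((1 < ‖z‖ ∧ z.re ∈ Set.Ioc (-(1/2) : ℝ) (1/2 : ℝ)) ∨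
    (‖z‖ = 1 ∧ Complex.arg z ∈ Set.Icc (Real.pi / 3) (Real.pi / 2)))}

/-- `F(t) = (1/(4π)) · (1/4+t²)·log(1/4+t²) / (t·(t²-3/4))`. -/
noncomputable def Ffun (t : ℝ) : ℝ :=
  (1 / (4 * Real.pi)) * ((1/4 + t^2) * Real.log (1/4 + t^2)) / (t * (t^2 - 3/4))

/-- The arc `𝒜 = {e^{iθ} : θ ∈ [π/3, π/2]}`. -/
noncomputable def arcA : Set ℂ :=
  {z | ∃ θ ∈ Set.Icc (Real.pi / 3) (Real.pi / 2), z = Complex.exp (θ * Complex.I)}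

/-- The segment `ℒ_ρ = {1/2 + ti : t ≥ √3/2}`. -/
noncomputable def lineRho : Set ℂ :=
  {z | ∃ t : ℝ, Real.sqrt 3 / 2 ≤ t ∧ z = 1/2 + t * Complex.I}

/-- The segment `ℒ_i = {ti : t ≥ 1}`. -/
def lineI : Set ℂ := {z | ∃ t : ℝ, 1 ≤ t ∧ z = t * Complex.I}

/-- The curve `Γ_α = {z ∈ ℱ : |z| > 1, 2πα·Im z = log|z|/(1-|z|⁻²)}`. -/
noncomputable def GammaA (α : ℝ) : Set ℂ :=
  {z | z ∈ Fdom ∧ 1 < ‖z‖ ∧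
    2 * Real.pi * α * z.im = Real.log (‖z‖) / (1 - ((‖z‖) ^ 2)⁻¹)}

/-!
Since `Im ((az+b)/(cz+d)) = Im z / |cz+d|²`, one has
`|σ_{c,d}(z)| = exp(-2πm · Im z/|cz+d|²) / |cz+d|^k`, so the difference
`(1/k) log|σ_{c,d}(z)| - log r_{c,d}(z)` equals exactly `2π(α - m/k) · Im z/|cz+d|²`.
For `(c,d) ≠ (0,0)` the factor `Im z/|cz+d|²` is at most `max (Im z) (Im z)⁻¹`, which is
bounded on the compact set `C`, uniformly in `(c,d)`; hence the difference tends to `0`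
uniformly as `m/k → α`.
-/

open Real

lemma Complex.im_mul_add_div_mul_add (a b c d : ℝ) (h : a * d - b * c = 1) (z : ℂ) :
    ((a * z + b) / (c * z + d)).im = z.im / ‖(c : ℂ) * z + d‖ ^ 2 := by
  rw [Complex.div_im, Complex.sq_norm, div_sub_div_same]
  congr 1
  simp only [Complex.add_im, Complex.add_re, Complex.mul_im, Complex.mul_re, Complex.ofReal_re,
    Complex.ofReal_im]
  linear_combination z.im * h

lemma Complex.mul_add_ne_zero_of_im_ne_zero {c d : ℝ} (hcd : c ≠ 0 ∨ d ≠ 0) {z : ℂ}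
    (hz : z.im ≠ 0) : (c : ℂ) * z + d ≠ 0 := by
  intro h
  have him : c * z.im = 0 := by simpa using congrArg Complex.im h
  have hc : c = 0 := (mul_eq_zero.mp him).resolve_right hz
  have hre : c * z.re + d = 0 := by simpa using congrArg Complex.re h
  simp only [hc, zero_mul, zero_add] at hre
  exact hcd.elim (· hc) (· hre)

lemma im_div_norm_mul_add_sq_le {c d : ℤ} (hcd : c ≠ 0 ∨ d ≠ 0) {z : ℂ} (hz : 0 < z.im) :
    z.im / ‖(c : ℂ) * z + d‖ ^ 2 ≤ max z.im z.im⁻¹ := by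
  have hnorm : ‖(c : ℂ) * z + d‖ ^ 2 = ((c : ℝ) * z.re + d) ^ 2 + (c : ℝ) ^ 2 * z.im ^ 2 := by
    rw [Complex.sq_norm, Complex.normSq_apply]
    simp only [Complex.add_re, Complex.add_im, Complex.mul_re, Complex.mul_im,
      Complex.intCast_re, Complex.intCast_im]
    ring
  rw [hnorm]
  by_cases hc : c = 0
  · have hd : (1 : ℝ) ≤ (d : ℝ) ^ 2 := by
      exact_mod_cast (one_le_sq_iff_one_le_abs _).mpr (Int.one_le_abs (hcd.resolve_left (· hc)))
    simp only [hc, Int.cast_zero, zero_mul, zero_add, zero_pow two_ne_zero, add_zero]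
    exact (div_le_self hz.le hd).trans (le_max_left _ _)
  · have hc1 : (1 : ℝ) ≤ (c : ℝ) ^ 2 := by
      exact_mod_cast (one_le_sq_iff_one_le_abs _).mpr (Int.one_le_abs hc)
    calc z.im / (((c : ℝ) * z.re + d) ^ 2 + (c : ℝ) ^ 2 * z.im ^ 2)
        ≤ z.im / z.im ^ 2 := by
          gcongr
          nlinarith [sq_nonneg ((c : ℝ) * z.re + d), sq_nonneg z.im]
      _ = z.im⁻¹ := by field_simp
      _ ≤ max z.im z.im⁻¹ := le_max_right _ _

lemma Int.ne_zero_or_ne_zero_of_gcd_eq_one {c d : ℤ} (hcd : Int.gcd c d = 1) :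
    c ≠ 0 ∨ d ≠ 0 := by
  rw [← not_and_or, ← Int.gcd_eq_zero_iff, hcd]
  exact one_ne_zero

lemma norm_sigmaP (k m : ℕ) {c d : ℤ} (hcd : Int.gcd c d = 1) (z : ℂ) :
    ‖sigmaP k m c d z‖ = Real.exp (-(2 * π * m * (z.im / ‖(c : ℂ) * z + d‖ ^ 2))) /
      ‖(c : ℂ) * z + d‖ ^ k := by
  have hbezout : (Int.gcdB c d : ℝ) * d - (-Int.gcdA c d : ℝ) * c = 1 := by
    have hz : (((c * Int.gcdA c d + d * Int.gcdB c d : ℤ)) : ℝ) = 1 := by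
      rw [← Int.gcd_eq_gcd_ab, hcd]
      norm_num
    push_cast at hz ⊢
    linear_combination hz
  have hexp : 2 * π * Complex.I * m * ((Int.gcdB c d : ℂ) * z - Int.gcdA c d) / (c * z + d)
      = (2 * π * m : ℝ) * (Complex.I * (((Int.gcdB c d : ℝ) * z + (-Int.gcdA c d : ℝ)) /
        ((c : ℝ) * z + (d : ℝ)))) := by
    push_cast
    ring
  rw [sigmaP, norm_div, norm_pow, Complex.norm_exp, hexp, Complex.re_ofReal_mul,
    Complex.I_mul_re, Complex.im_mul_add_div_mul_add _ _ _ _ hbezout]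
  push_cast
  ring_nf

lemma log_norm_sigmaP_div_sub_log_rP (α : ℝ) {k : ℕ} (hk : k ≠ 0) (m : ℕ) {c d : ℤ}
    (hcd : Int.gcd c d = 1) {z : ℂ} (hz : 0 < z.im) :
    (1 / (k : ℝ)) * Real.log ‖sigmaP k m c d z‖ - Real.log (rP α c d z)
      = (α - m / k) * (2 * π * (z.im / ‖(c : ℂ) * z + d‖ ^ 2)) := by
  have hne : (c : ℝ) ≠ 0 ∨ (d : ℝ) ≠ 0 := by
    exact_mod_cast Int.ne_zero_or_ne_zero_of_gcd_eq_one hcd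
  have hw : 0 < ‖(c : ℂ) * z + d‖ :=
    norm_pos_iff.mpr (by exact_mod_cast Complex.mul_add_ne_zero_of_im_ne_zero hne hz.ne')
  rw [norm_sigmaP k m hcd, rP, Real.log_div (Real.exp_ne_zero _) (pow_ne_zero _ hw.ne'),
    Real.log_div (Real.exp_ne_zero _) hw.ne', Real.log_exp, Real.log_exp, Real.log_pow]
  field_simp
  ring

lemma Pset.gcd_eq_one {p : ℤ × ℤ} (hp : p ∈ Pset) : Int.gcd p.1 p.2 = 1 := by
  rcases hp with ⟨hcop, -⟩ | rfl
  · exact Int.isCoprime_iff_gcd_eq_one.mp hcop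
  · rfl

lemma eventually_forall_abs_sub_mul_le {ι : Type*} {l : Filter ι} {q : ι → ℝ} {α : ℝ}
    (hq : Tendsto q l (𝓝 α)) (B : ℝ) {ε : ℝ} (hε : 0 < ε) :
    ∀ᶠ n in l, ∀ t : ℝ, |t| ≤ B → |(α - q n) * t| ≤ ε := by
  have hB : 0 < |B| + 1 := by positivity
  filter_upwards [hq (Metric.closedBall_mem_nhds α (div_pos hε hB))] with n hn t ht
  rw [Set.mem_preimage, Metric.mem_closedBall, Real.dist_eq, abs_sub_comm] at hn
  calc |(α - q n) * t| = |α - q n| * |t| := abs_mul _ _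
    _ ≤ ε / (|B| + 1) * (|B| + 1) := by gcongr; linarith [le_abs_self B]
    _ = ε := div_mul_cancel₀ _ hB.ne'

theorem log_sigma_approx_general (α : ℝ)
    (k m : ℕ → ℕ) (hk4 : ∀ n, 4 ≤ k n)
    (hm : Tendsto (fun n => (m n : ℝ) / (k n : ℝ)) atTop (nhds α))
    (C : Set ℂ) (hCF : C ⊆ Fdom) (hCc : IsCompact C) :
    ∀ ε : ℝ, 0 < ε → ∀ᶠ n in atTop, ∀ z ∈ C, ∀ p ∈ Pset,
      |(1 / (k n : ℝ)) * Real.log (‖sigmaP (k n) (m n) p.1 p.2 z‖)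
          - Real.log (rP α p.1 p.2 z)| ≤ ε := by
  intro ε hε
  have him : ∀ z ∈ C, 0 < z.im := fun z hz => (hCF hz).1
  obtain ⟨B, hB⟩ := hCc.exists_bound_of_continuousOn (f := fun z : ℂ => max z.im z.im⁻¹)
    (Complex.continuous_im.continuousOn.sup
      (Complex.continuous_im.continuousOn.inv₀ fun z hz => (him z hz).ne'))
  filter_upwards [eventually_forall_abs_sub_mul_le hm (2 * π * B) hε] with n hn z hz p hp
  have hgcd := Pset.gcd_eq_one hp
  have hzim := him z hz
  rw [log_norm_sigmaP_div_sub_log_rP α (by have := hk4 n; omega) (m n) hgcd hzim]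
  refine hn _ ?_
  rw [abs_of_nonneg (by positivity)]
  gcongr
  calc z.im / ‖(p.1 : ℂ) * z + p.2‖ ^ 2 ≤ max z.im z.im⁻¹ :=
        im_div_norm_mul_add_sq_le (Int.ne_zero_or_ne_zero_of_gcd_eq_one hgcd) hzim
    _ ≤ B := (le_abs_self _).trans (hB z hz)

/-- on a nonempty compact `C ⊆ ℱ`,
`sup_{z∈C} sup_{(c,d)∈𝒫} |(1/k_n)·log|σ⁽ⁿ⁾_{c,d}(z)| - log r_{c,d}(z)| → 0`. -/
theorem log_sigma_approx (α : ℝ) (hα : 0 < α)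
    (k m : ℕ → ℕ) (hke : ∀ n, Even (k n)) (hk4 : ∀ n, 4 ≤ k n)
    (hki : Tendsto k atTop atTop)
    (hm : Tendsto (fun n => (m n : ℝ) / (k n : ℝ)) atTop (nhds α))
    (C : Set ℂ) (hCF : C ⊆ Fdom) (hCne : C.Nonempty) (hCc : IsCompact C) :
    ∀ ε : ℝ, 0 < ε → ∀ᶠ n in atTop, ∀ z ∈ C, ∀ p ∈ Pset,
      |(1 / (k n : ℝ)) * Real.log (‖sigmaP (k n) (m n) p.1 p.2 z‖)
          - Real.log (rP α p.1 p.2 z)| ≤ ε :=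
  log_sigma_approx_general α k m hk4 hm C hCF hCc
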